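/- For every n ≥ 1 and every y ∈ V_n∖V₀, there exists a unique function G_n(·,y) : V_n → ℝ solving the discrete Dirichlet problem (Δ_n G_n(x,y) = −3^n for x = y; Δ_n G_n(x,y) = 0 for x ∈ V_n∖(V₀∪{y}); G_n(a_i,y) = 0 for i = 0,1,2). Moreover, G_n is symmetric, G_n(x,y) = G_n(y,x) for all x,y ∈ V_n∖V₀, and satisfies 0 ≤ G_n(x,y) ≤ G_n(y,y) for all x ∈ V_n and y ∈ V_n∖V₀. -/

import Mathlib

open scoped Classical
open Real Set

noncomputable section

abbrev Pt : Type := ℝ × ℝ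

/-- The three corners of the unit triangle. -/
def sierA : Fin 3 → Pt
  | 0 => (0, 0)
  | 1 => (1 / 2, Real.sqrt 3 / 2)
  | 2 => (1, 0)

/-- The three contractions `φᵢ(x) = (x + aᵢ)/2`. -/
def ctr (i : Fin 3) (x : Pt) : Pt :=
  ((x.1 + (sierA i).1) / 2, (x.2 + (sierA i).2) / 2)

/-- The vertex sets `V n`. -/
def V : ℕ → Finset Pt
  | 0 => {sierA 0, sierA 1, sierA 2}
  | n + 1 => (V n).image (ctr 0) ∪ (V n).image (ctr 1) ∪ (V n).image (ctr 2)

/-- The (ordered) edge sets: `(x, y) ∈ Ed n` iff `{x,y} ∈ E_n`; each undirected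
edge appears with both orientations. -/
def Ed : ℕ → Finset (Pt × Pt)
  | 0 => (V 0 ×ˢ V 0).filter fun p => p.1 ≠ p.2
  | n + 1 => Finset.univ.biUnion fun i : Fin 3 => (Ed n).image fun p => (ctr i p.1, ctr i p.2)

/-- `V* = ⋃ n, V n`. -/
def Vstar : Set Pt := ⋃ n, (V n : Set Pt)

/-- The level-`n` energy `E_n(u,u) = (5/3)^n Σ_{{x,y} ∈ E_n} (u y - u x)²`
(each undirected edge counted once, whence the division by 2). -/
def En (n : ℕ) (u : Pt → ℝ) : ℝ :=
  (5 / 3 : ℝ) ^ n * (∑ p ∈ Ed n, (u p.2 - u p.1) ^ 2) / 2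

/-- The discrete Laplacian `Δ_n u (x) = 5^n Σ_{y ∼ₙ x} (u y - u x)`. -/
def lap (n : ℕ) (u : Pt → ℝ) (x : Pt) : ℝ :=
  (5 : ℝ) ^ n * ∑ p ∈ (Ed n).filter (fun p => p.1 = x), (u p.2 - u p.1)

/-- `g` is the level-`n` Green function with pole at `y`: it solves the
discrete Dirichlet problem `Δ_n g (y) = −3^n`, `Δ_n g (x) = 0` for
`x ∈ V_n ∖ (V₀ ∪ {y})`, and `g = 0` on `V₀ = {a₀,a₁,a₂}`. -/
def IsGreen (n : ℕ) (y : Pt) (g : Pt → ℝ) : Prop :=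
  lap n g y = -(3 : ℝ) ^ n ∧
  (∀ x ∈ (V n : Set Pt), x ∉ (V 0 : Set Pt) → x ≠ y → lap n g x = 0) ∧
  ∀ i : Fin 3, g (sierA i) = 0


/-!
`Δ_n` is `5ⁿ` times the combinatorial Laplacian of the finite graph `(V_n, E_n)`, which is
connected and in which every edge occurs with both orientations. On such a graph the maximum
principle holds: a function with nonnegative Laplacian off a set `S` that every vertex can reach
attains its maximum in `S`. Applied with `S = V₀` it gives uniqueness for the Dirichlet problem,
hence existence by finite dimensionality, and `G_n(·,y) ≥ 0`; applied with `S = V₀ ∪ {y}` it gives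
`G_n(x,y) ≤ G_n(y,y)`. Symmetry is Green's identity `Σ u Δv = Σ v Δu`, which holds because
`Σ_x u(x) Δv(x)` is, up to a factor, the symmetric form `Σ_{edges} (u y - u x)(v y - v x)`.
-/

open Relation Finset

section GraphLaplacian

variable {α : Type*} [DecidableEq α]

def graphLap (E : Finset (α × α)) : (α → ℝ) →ₗ[ℝ] α → ℝ where
  toFun u x := ∑ p ∈ E with p.1 = x, (u p.2 - u p.1)
  map_add' u v := by
    ext x
    simp only [Pi.add_apply, ← sum_add_distrib]
    exact sum_congr rfl fun _ _ => by ring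
  map_smul' c u := by
    ext x
    simp only [Pi.smul_apply, smul_eq_mul, RingHom.id_apply, mul_sum]
    exact sum_congr rfl fun _ _ => by ring

variable {E : Finset (α × α)} {s : Finset α} {u : α → ℝ}

theorem graphLap_apply (E : Finset (α × α)) (u : α → ℝ) (x : α) :
    graphLap E u x = ∑ p ∈ E with p.1 = x, (u p.2 - u p.1) :=
  rfl

theorem apply_eq_of_isMaxOn_of_graphLap_nonneg (hE : ∀ p ∈ E, p.2 ∈ s) {a c : α}
    (hmax : IsMaxOn u s a) (ha : 0 ≤ graphLap E u a) (hac : (a, c) ∈ E) : u c = u a := by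
  have hle : ∀ p ∈ {p ∈ E | p.1 = a}, u p.2 - u p.1 ≤ 0 := by
    intro p hp
    rw [mem_filter] at hp
    rw [hp.2]
    exact sub_nonpos.2 (hmax (hE p hp.1))
  have hsum : ∑ p ∈ E with p.1 = a, (u p.2 - u p.1) = 0 :=
    le_antisymm (sum_nonpos hle) ha
  exact sub_eq_zero.1 <| (sum_eq_zero_iff_of_nonpos hle).1 hsum (a, c) (mem_filter.2 ⟨hac, rfl⟩)

theorem exists_isMaxOn_mem_of_reflTransGen (hE : ∀ p ∈ E, p.2 ∈ s) {S : Set α}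
    (hu : ∀ x ∈ s, x ∉ S → 0 ≤ graphLap E u x) {w z : α}
    (hwz : ReflTransGen (fun a b => (a, b) ∈ E) w z) (hz : z ∈ S) (hw : w ∈ s)
    (hmax : IsMaxOn u s w) : ∃ z' ∈ S, IsMaxOn u s z' := by
  induction hwz using ReflTransGen.head_induction_on with
  | refl => exact ⟨z, hz, hmax⟩
  | @head a c hac _ ih =>
    by_cases haS : a ∈ S
    · exact ⟨a, haS, hmax⟩
    · have hca := apply_eq_of_isMaxOn_of_graphLap_nonneg hE hmax (hu a hw haS) hac
      exact ih (hE _ hac) fun x hx => hca ▸ hmax hx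

theorem exists_le_of_graphLap_nonneg (hE : ∀ p ∈ E, p.2 ∈ s) {S : Set α}
    (hS : ∀ x ∈ s, ∃ z ∈ S, ReflTransGen (fun a b => (a, b) ∈ E) x z)
    (hu : ∀ x ∈ s, x ∉ S → 0 ≤ graphLap E u x) {x : α} (hx : x ∈ s) :
    ∃ z ∈ S, u x ≤ u z := by
  obtain ⟨m, hm, hmax⟩ := s.exists_max_image u ⟨x, hx⟩
  obtain ⟨z, hzS, hmz⟩ := hS m hm
  obtain ⟨z', hz'S, hz'⟩ := exists_isMaxOn_mem_of_reflTransGen hE hu hmz hzS hm hmax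
  exact ⟨z', hz'S, hz' hx⟩

theorem eqOn_zero_of_graphLap_eq_zero (hE : ∀ p ∈ E, p.2 ∈ s) {S : Set α}
    (hS : ∀ x ∈ s, ∃ z ∈ S, ReflTransGen (fun a b => (a, b) ∈ E) x z)
    (hu : ∀ x ∈ s, x ∉ S → graphLap E u x = 0) (hu₀ : ∀ z ∈ S, u z = 0) :
    Set.EqOn u 0 s := by
  intro x hx
  obtain ⟨z, hz, hle⟩ := exists_le_of_graphLap_nonneg hE hS (fun y hy hyS => (hu y hy hyS).ge) hx
  obtain ⟨z', hz', hge⟩ := exists_le_of_graphLap_nonneg (u := -u) hE hS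
    (fun y hy hyS => by rw [map_neg, Pi.neg_apply, hu y hy hyS, neg_zero]) hx
  simp only [Pi.neg_apply, hu₀ z hz, hu₀ z' hz', neg_zero] at hle hge
  exact le_antisymm hle (neg_nonpos.1 hge)

theorem exists_graphLap_eq (I : Finset α)
    (huniq : ∀ u : α → ℝ, (∀ x ∉ I, u x = 0) → (∀ x ∈ I, graphLap E u x = 0) → ∀ x ∈ I, u x = 0)
    (f : α → ℝ) : ∃ u : α → ℝ, (∀ x ∉ I, u x = 0) ∧ ∀ x ∈ I, graphLap E u x = f x := by
  let T : (I → ℝ) →ₗ[ℝ] I → ℝ := LinearMap.funLeft ℝ ℝ Subtype.val ∘ₗ graphLap E ∘ₗ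
    Function.ExtendByZero.linearMap ℝ Subtype.val
  have hext_out (v : I → ℝ) (x : α) (hx : x ∉ I) : Function.extend Subtype.val v 0 x = 0 :=
    Function.extend_apply' _ _ _ fun ⟨a, ha⟩ => hx (ha ▸ a.2)
  have hT : Function.Injective T := by
    refine (injective_iff_map_eq_zero T).2 fun v hv => funext fun x => ?_
    have := huniq _ (hext_out v) (fun x hx => congrFun hv ⟨x, hx⟩) x x.2
    rwa [Subtype.val_injective.extend_apply] at this
  obtain ⟨v, hv⟩ := LinearMap.injective_iff_surjective.1 hT fun x => f x
  exact ⟨Function.extend Subtype.val v 0, hext_out v, fun x hx => congrFun hv ⟨x, hx⟩⟩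

theorem two_mul_sum_mul_graphLap (hE : ∀ p ∈ E, p.1 ∈ s) (hswap : ∀ p ∈ E, p.swap ∈ E)
    (u v : α → ℝ) :
    2 * ∑ x ∈ s, u x * graphLap E v x = -∑ p ∈ E, (u p.2 - u p.1) * (v p.2 - v p.1) := by
  have hfib : ∑ x ∈ s, u x * graphLap E v x = ∑ p ∈ E, u p.1 * (v p.2 - v p.1) := by
    rw [← sum_fiberwise_of_maps_to hE]
    refine sum_congr rfl fun x _ => ?_
    rw [graphLap_apply, mul_sum]
    exact sum_congr rfl fun p hp => by rw [(mem_filter.1 hp).2]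
  have hflip : ∑ p ∈ E, u p.1 * (v p.2 - v p.1) = ∑ p ∈ E, u p.2 * (v p.1 - v p.2) :=
    sum_nbij' Prod.swap Prod.swap hswap hswap (fun _ _ => rfl) (fun _ _ => rfl) fun _ _ => rfl
  rw [hfib, two_mul]
  nth_rewrite 2 [hflip]
  rw [← sum_add_distrib, ← sum_neg_distrib]
  exact sum_congr rfl fun _ _ => by ring

theorem sum_mul_graphLap_comm (hE : ∀ p ∈ E, p.1 ∈ s) (hswap : ∀ p ∈ E, p.swap ∈ E)
    (u v : α → ℝ) : ∑ x ∈ s, u x * graphLap E v x = ∑ x ∈ s, v x * graphLap E u x := by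
  have huv := two_mul_sum_mul_graphLap hE hswap u v
  have hvu := two_mul_sum_mul_graphLap hE hswap v u
  simp only [mul_comm (v _ - v _)] at hvu
  linarith

end GraphLaplacian

section SierpinskiGraph

variable {n : ℕ}

theorem sierA_injective : Function.Injective sierA := by
  intro i j h
  fin_cases i <;> fin_cases j <;> simp_all [sierA, Prod.ext_iff]

theorem mem_V_zero_iff {x : Pt} : x ∈ V 0 ↔ ∃ i, sierA i = x := by
  simp [V, Fin.exists_fin_succ, eq_comm]

theorem apply_eq_zero_of_mem_V_zero {u : Pt → ℝ} (hu₀ : ∀ i, u (sierA i) = 0) {x : Pt}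
    (hx : x ∈ V 0) : u x = 0 := by
  obtain ⟨i, rfl⟩ := mem_V_zero_iff.1 hx
  exact hu₀ i

theorem ctr_sierA_self (i : Fin 3) : ctr i (sierA i) = sierA i := by
  simp only [ctr, Prod.ext_iff]
  constructor <;> ring

theorem ctr_sierA_comm (i j : Fin 3) : ctr i (sierA j) = ctr j (sierA i) := by
  simp only [ctr, Prod.ext_iff]
  constructor <;> ring

theorem mem_V_succ_iff {x : Pt} : x ∈ V (n + 1) ↔ ∃ i, ∃ v ∈ V n, ctr i v = x := by
  simp [V, Fin.exists_fin_succ]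

theorem ctr_mem_V (i : Fin 3) {x : Pt} (hx : x ∈ V n) : ctr i x ∈ V (n + 1) :=
  mem_V_succ_iff.2 ⟨i, x, hx, rfl⟩

theorem sierA_mem_V (n : ℕ) (i : Fin 3) : sierA i ∈ V n := by
  induction n with
  | zero => exact mem_V_zero_iff.2 ⟨i, rfl⟩
  | succ n ih => simpa only [ctr_sierA_self] using ctr_mem_V i ih

theorem mem_V_of_mem_Ed {p : Pt × Pt} (hp : p ∈ Ed n) : p.1 ∈ V n ∧ p.2 ∈ V n := by
  induction n generalizing p with
  | zero => exact (mem_product.1 (mem_filter.1 hp).1)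
  | succ n ih =>
    simp only [Ed, Finset.mem_biUnion, Finset.mem_image, Finset.mem_univ, true_and] at hp
    obtain ⟨i, q, hq, rfl⟩ := hp
    exact ⟨ctr_mem_V i (ih hq).1, ctr_mem_V i (ih hq).2⟩

theorem swap_mem_Ed {p : Pt × Pt} (hp : p ∈ Ed n) : p.swap ∈ Ed n := by
  induction n generalizing p with
  | zero =>
    simp only [Ed, mem_filter, mem_product] at hp ⊢
    exact ⟨hp.1.symm, Ne.symm hp.2⟩
  | succ n ih =>
    simp only [Ed, Finset.mem_biUnion, Finset.mem_image, Finset.mem_univ, true_and] at hp ⊢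
    obtain ⟨i, q, hq, rfl⟩ := hp
    exact ⟨i, q.swap, ih hq, rfl⟩

theorem ctr_mem_Ed (i : Fin 3) {x y : Pt} (h : (x, y) ∈ Ed n) :
    (ctr i x, ctr i y) ∈ Ed (n + 1) := by
  simp only [Ed, Finset.mem_biUnion, Finset.mem_univ, true_and]
  exact ⟨i, mem_image_of_mem _ h⟩

theorem sierA_mem_Ed_zero {i j : Fin 3} (h : i ≠ j) : (sierA i, sierA j) ∈ Ed 0 :=
  mem_filter.2 ⟨mem_product.2 ⟨sierA_mem_V 0 i, sierA_mem_V 0 j⟩, sierA_injective.ne h⟩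

theorem reflTransGen_sierA (n : ℕ) (i : Fin 3) {x : Pt} (hx : x ∈ V n) :
    ReflTransGen (fun a b => (a, b) ∈ Ed n) x (sierA i) := by
  induction n generalizing i x with
  | zero =>
    obtain ⟨j, rfl⟩ := mem_V_zero_iff.1 hx
    rcases eq_or_ne j i with rfl | hji
    · exact ReflTransGen.refl
    · exact ReflTransGen.single (sierA_mem_Ed_zero hji)
  | succ n ih =>
    obtain ⟨j, v, hv, rfl⟩ := mem_V_succ_iff.1 hx
    have lift (k : Fin 3) {a b : Pt} (h : ReflTransGen (fun a b => (a, b) ∈ Ed n) a b) :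
        ReflTransGen (fun a b => (a, b) ∈ Ed (n + 1)) (ctr k a) (ctr k b) :=
      ReflTransGen.lift (ctr k) (fun _ _ => ctr_mem_Ed k) _ _ h
    -- `φⱼ(v) → φⱼ(aᵢ) = φᵢ(aⱼ) → φᵢ(aᵢ) = aᵢ`
    have h₁ := lift j (ih i hv)
    have h₂ := lift i (ih i (sierA_mem_V n j))
    rw [ctr_sierA_comm] at h₁
    rw [ctr_sierA_self] at h₂
    exact h₁.trans h₂

theorem lap_eq_pow_mul_graphLap (n : ℕ) (u : Pt → ℝ) (x : Pt) :
    lap n u x = 5 ^ n * graphLap (Ed n) u x :=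
  rfl

end SierpinskiGraph

section DirichletProblem

variable {n : ℕ} {u : Pt → ℝ}

theorem lap_neg (n : ℕ) (u : Pt → ℝ) (x : Pt) : lap n (-u) x = -lap n u x := by
  simp only [lap_eq_pow_mul_graphLap, map_neg, Pi.neg_apply, mul_neg]

theorem lap_sub (n : ℕ) (u v : Pt → ℝ) (x : Pt) : lap n (u - v) x = lap n u x - lap n v x := by
  simp only [lap_eq_pow_mul_graphLap, map_sub, Pi.sub_apply, mul_sub]

theorem exists_le_of_lap_nonneg {S : Set Pt} (hS : (V 0 : Set Pt) ⊆ S)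
    (hu : ∀ x ∈ V n, x ∉ S → 0 ≤ lap n u x) {x : Pt} (hx : x ∈ V n) : ∃ z ∈ S, u x ≤ u z :=
  exists_le_of_graphLap_nonneg (fun _ hp => (mem_V_of_mem_Ed hp).2)
    (fun y hy => ⟨sierA 0, hS (sierA_mem_V 0 0), reflTransGen_sierA n 0 hy⟩)
    (fun y hy hyS => nonneg_of_mul_nonneg_right (hu y hy hyS) (by positivity)) hx

theorem eqOn_zero_of_lap_eq_zero (hu : ∀ x ∈ V n, x ∉ (V 0 : Set Pt) → lap n u x = 0)
    (hu₀ : ∀ i, u (sierA i) = 0) : Set.EqOn u 0 (V n) :=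
  eqOn_zero_of_graphLap_eq_zero (fun _ hp => (mem_V_of_mem_Ed hp).2)
    (fun y hy => ⟨sierA 0, sierA_mem_V 0 0, reflTransGen_sierA n 0 hy⟩)
    (fun y hy hyS => (mul_eq_zero.1 (hu y hy hyS)).resolve_left (by positivity))
    fun _ => apply_eq_zero_of_mem_V_zero hu₀

theorem exists_lap_eq (n : ℕ) (f : Pt → ℝ) :
    ∃ u : Pt → ℝ, (∀ i, u (sierA i) = 0) ∧ ∀ x ∈ V n, x ∉ (V 0 : Set Pt) → lap n u x = f x := by
  have hcorner (i : Fin 3) : sierA i ∉ V n \ V 0 := fun h => (mem_sdiff.1 h).2 (sierA_mem_V 0 i)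
  obtain ⟨u, hu₀, hu⟩ := exists_graphLap_eq (E := Ed n) (V n \ V 0)
    (fun u hu₀ hu x hx => eqOn_zero_of_lap_eq_zero
      (fun y hy hy₀ => by rw [lap_eq_pow_mul_graphLap, hu y (mem_sdiff.2 ⟨hy, hy₀⟩), mul_zero])
      (fun i => hu₀ _ (hcorner i)) (mem_sdiff.1 hx).1)
    (fun x => f x / 5 ^ n)
  refine ⟨u, fun i => hu₀ _ (hcorner i), fun x hx hx₀ => ?_⟩
  rw [lap_eq_pow_mul_graphLap, hu x (mem_sdiff.2 ⟨hx, hx₀⟩), mul_div_cancel₀ _ (by positivity)]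

theorem sum_mul_lap_comm (n : ℕ) (u v : Pt → ℝ) :
    ∑ x ∈ V n, u x * lap n v x = ∑ x ∈ V n, v x * lap n u x := by
  simp only [lap_eq_pow_mul_graphLap, mul_left_comm (u _), mul_left_comm (v _), ← mul_sum]
  rw [sum_mul_graphLap_comm (fun _ hp => (mem_V_of_mem_Ed hp).1) fun _ => swap_mem_Ed]

end DirichletProblem

namespace IsGreen

variable {n : ℕ} {y : Pt} {g : Pt → ℝ}

theorem eqOn {g' : Pt → ℝ} (hg : IsGreen n y g) (hg' : IsGreen n y g') : Set.EqOn g g' (V n) :=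
  fun x hx => sub_eq_zero.1 <| eqOn_zero_of_lap_eq_zero (u := g - g')
    (fun z hz hz₀ => by
      rw [lap_sub]
      rcases eq_or_ne z y with rfl | hzy
      · rw [hg.1, hg'.1, sub_self]
      · rw [hg.2.1 z hz hz₀ hzy, hg'.2.1 z hz hz₀ hzy, sub_self])
    (fun i => by rw [Pi.sub_apply, hg.2.2, hg'.2.2, sub_self]) hx

theorem sum_mul_lap {u : Pt → ℝ} (hg : IsGreen n y g) (hy : y ∈ V n)
    (hu₀ : ∀ i, u (sierA i) = 0) : ∑ x ∈ V n, u x * lap n g x = u y * -3 ^ n := by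
  rw [sum_eq_single_of_mem y hy, hg.1]
  intro z hz hzy
  by_cases hz₀ : z ∈ (V 0 : Set Pt)
  · rw [apply_eq_zero_of_mem_V_zero hu₀ hz₀, zero_mul]
  · rw [hg.2.1 z hz hz₀ hzy, mul_zero]

theorem apply_comm {x : Pt} {g' : Pt → ℝ} (hg : IsGreen n x g) (hg' : IsGreen n y g')
    (hx : x ∈ V n) (hy : y ∈ V n) : g' x = g y := by
  have h := sum_mul_lap_comm n g g'
  rw [hg'.sum_mul_lap hy hg.2.2, hg.sum_mul_lap hx hg'.2.2] at h
  exact mul_right_cancel₀ (neg_ne_zero.2 (by positivity)) h.symm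

theorem nonneg (hg : IsGreen n y g) {x : Pt} (hx : x ∈ V n) : 0 ≤ g x := by
  obtain ⟨z, hz, hxz⟩ := exists_le_of_lap_nonneg (u := -g) subset_rfl
    (fun w hw hw₀ => by
      rw [lap_neg]
      rcases eq_or_ne w y with rfl | hwy
      · rw [hg.1, neg_neg]; positivity
      · rw [hg.2.1 w hw hw₀ hwy, neg_zero]) hx
  simpa [apply_eq_zero_of_mem_V_zero hg.2.2 hz] using hxz

theorem le_apply_self (hg : IsGreen n y g) (hy : y ∈ V n) {x : Pt} (hx : x ∈ V n) :
    g x ≤ g y := by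
  obtain ⟨z, hz, hxz⟩ := exists_le_of_lap_nonneg (S := insert y (V 0 : Set Pt))
    (Set.subset_insert _ _)
    (fun w hw hwS => (hg.2.1 w hw (fun h => hwS (.inr h)) fun h => hwS (.inl h)).ge) hx
  rcases hz with rfl | hz₀
  · exact hxz
  · exact hxz.trans (apply_eq_zero_of_mem_V_zero hg.2.2 hz₀ ▸ hg.nonneg hy)

end IsGreen

theorem green_exists_unique_symm_bounds_general (n : ℕ) :
    (∀ y ∈ (V n : Set Pt), y ∉ (V 0 : Set Pt) →
      (∃ g : Pt → ℝ, IsGreen n y g) ∧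
      ∀ g g' : Pt → ℝ, IsGreen n y g → IsGreen n y g' →
        ∀ x ∈ (V n : Set Pt), g x = g' x) ∧
    (∀ x ∈ (V n : Set Pt), x ∉ (V 0 : Set Pt) →
      ∀ y ∈ (V n : Set Pt), y ∉ (V 0 : Set Pt) →
        ∀ gx gy : Pt → ℝ, IsGreen n x gx → IsGreen n y gy → gy x = gx y) ∧
    (∀ y ∈ (V n : Set Pt), y ∉ (V 0 : Set Pt) →
      ∀ g : Pt → ℝ, IsGreen n y g →
        ∀ x ∈ (V n : Set Pt), 0 ≤ g x ∧ g x ≤ g y) := by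
  refine ⟨fun y hy hy₀ => ⟨?_, fun g g' hg hg' x hx => hg.eqOn hg' hx⟩,
    fun x hx _ y hy _ gx gy hgx hgy => hgx.apply_comm hgy hx hy,
    fun y hy _ g hg x hx => ⟨hg.nonneg hx, hg.le_apply_self hy hx⟩⟩
  obtain ⟨g, hg₀, hg⟩ := exists_lap_eq n fun x => if x = y then -3 ^ n else 0
  refine ⟨g, by simpa using hg y hy hy₀, fun x hx hx₀ hxy => by simpa [hxy] using hg x hx hx₀, hg₀⟩

/-- Existence, uniqueness (on `V_n`), symmetry and positivity/diagonal bounds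
for the level-`n` Green function. -/
theorem green_exists_unique_symm_bounds (n : ℕ) (hn : 1 ≤ n) :
    (∀ y ∈ (V n : Set Pt), y ∉ (V 0 : Set Pt) →
      (∃ g : Pt → ℝ, IsGreen n y g) ∧
      ∀ g g' : Pt → ℝ, IsGreen n y g → IsGreen n y g' →
        ∀ x ∈ (V n : Set Pt), g x = g' x) ∧
    (∀ x ∈ (V n : Set Pt), x ∉ (V 0 : Set Pt) →
      ∀ y ∈ (V n : Set Pt), y ∉ (V 0 : Set Pt) →
        ∀ gx gy : Pt → ℝ, IsGreen n x gx → IsGreen n y gy → gy x = gx y) ∧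
    (∀ y ∈ (V n : Set Pt), y ∉ (V 0 : Set Pt) →
      ∀ g : Pt → ℝ, IsGreen n y g →
        ∀ x ∈ (V n : Set Pt), 0 ≤ g x ∧ g x ≤ g y) :=
  green_exists_unique_symm_bounds_general n

end
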